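/- Let k be a field, H a Hopf algebra over k, and A a commutative k-algebra with a Poisson bracket carrying an H-module Poisson algebra structure μ. Let F : ℕ → Submodule k A be a Poisson filtration (F monotone, ⋃ₙ F n = A, 1 ∈ F 0, (F i)·(F j) ⊆ F (i+j), ⁅F i, F j⁆ ⊆ F (i+j)) such that each F n is an H-submodule (μ h a ∈ F n for all h ∈ H, a ∈ F n). Define on Polynomial A the coefficientwise action μ' by (μ' h p).coeff n = μ h (p.coeff n) and the bracket B by (B p q).coeff m = Σ_{i+j=m} ⁅p.coeff i, q.coeff j⁆. Then μ' makes Polynomial A an H-module Poisson algebra with respect to B (in particular μ' h (C a * X^n) has all the Poisson-module compatibilities, μ' h 1 = ε(h)·1, the product rule μ' h (p*q) = Σ (μ' h₁ p)(μ' h₂ q), and μ' h (B p q) = Σ B(μ' h₁ p, μ' h₂ q) hold), the Rees subalgebra R = {p ∈ Polynomial A : p.coeff n ∈ F n for all n} is stable under μ', and each homogeneous component {C a * X^n : a ∈ F n} is an H-submodule. -/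

import Mathlib

open TensorProduct

/-- An `H`-module Poisson algebra structure on `A` respecting a Poisson filtration `F`
induces an `H`-module Poisson algebra structure on `Polynomial A` (with the convolution
bracket), stabilizing the Rees subalgebra and each homogeneous component `(F n)·Xⁿ`. -/
theorem hopf_action_on_rees {k : Type*} [Field k]
    {H : Type*} [Ring H] [HopfAlgebra k H]
    {A : Type*} [CommRing A] [Algebra k A]
    (B : A →ₗ[k] A →ₗ[k] A)
    (hB_anti : ∀ a b, B a b = -B b a)
    (hB_jac : ∀ a b c, B a (B b c) + B b (B c a) + B c (B a b) = 0)
    (hB_leib : ∀ a b c, B a (b * c) = B a b * c + b * B a c)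
    (μ : H →ₗ[k] A →ₗ[k] A)
    (hμ_one : ∀ a, μ 1 a = a)
    (hμ_mul : ∀ (h h' : H) (a : A), μ (h * h') a = μ h (μ h' a))
    (hunit : ∀ h : H, μ h 1 = Coalgebra.counit (R := k) h • (1 : A))
    (hmul : ∀ (h : H) (a b : A),
      μ h (a * b) = LinearMap.mul' k A
        (TensorProduct.map (μ.flip a) (μ.flip b) (Coalgebra.comul (R := k) h)))
    (hbr : ∀ (h : H) (a b : A),
      μ h (B a b) = TensorProduct.lift B
        (TensorProduct.map (μ.flip a) (μ.flip b) (Coalgebra.comul (R := k) h)))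
    (F : ℕ → Submodule k A)
    (hFmono : Monotone F)
    (hFunion : ∀ a : A, ∃ n, a ∈ F n)
    (hF1 : (1 : A) ∈ F 0)
    (hFmul : ∀ i j : ℕ, ∀ a ∈ F i, ∀ b ∈ F j, a * b ∈ F (i + j))
    (hFbr : ∀ i j : ℕ, ∀ a ∈ F i, ∀ b ∈ F j, B a b ∈ F (i + j))
    (hFH : ∀ (n : ℕ) (h : H), ∀ a ∈ F n, μ h a ∈ F n)
    -- the coefficientwise action `μ'` on `Polynomial A`
    (μ' : H →ₗ[k] Polynomial A →ₗ[k] Polynomial A)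
    (hμ'coeff : ∀ (h : H) (p : Polynomial A) (i : ℕ), (μ' h p).coeff i = μ h (p.coeff i))
    -- the induced bracket on `Polynomial A`
    (Bp : Polynomial A →ₗ[k] Polynomial A →ₗ[k] Polynomial A)
    (hBpcoeff : ∀ (p q : Polynomial A) (i : ℕ),
      (Bp p q).coeff i = ∑ ij ∈ Finset.HasAntidiagonal.antidiagonal i, B (p.coeff ij.1) (q.coeff ij.2)) :
    -- `μ'` makes `Polynomial A` an `H`-module
    (∀ p : Polynomial A, μ' 1 p = p) ∧
    (∀ (h h' : H) (p : Polynomial A), μ' (h * h') p = μ' h (μ' h' p)) ∧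
    -- unit condition
    (∀ h : H, μ' h (1 : Polynomial A) = Coalgebra.counit (R := k) h • (1 : Polynomial A)) ∧
    -- product rule `μ' h (p*q) = Σ (μ' h₁ p)(μ' h₂ q)`
    (∀ (h : H) (p q : Polynomial A),
      μ' h (p * q) = LinearMap.mul' k (Polynomial A)
        (TensorProduct.map (μ'.flip p) (μ'.flip q) (Coalgebra.comul (R := k) h))) ∧
    -- bracket rule `μ' h (B p q) = Σ B (μ' h₁ p) (μ' h₂ q)`
    (∀ (h : H) (p q : Polynomial A),
      μ' h (Bp p q) = TensorProduct.lift Bp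
        (TensorProduct.map (μ'.flip p) (μ'.flip q) (Coalgebra.comul (R := k) h))) ∧
    -- the Rees subalgebra is stable under `μ'`
    (∀ (h : H) (p : Polynomial A), (∀ i, p.coeff i ∈ F i) → ∀ i, (μ' h p).coeff i ∈ F i) ∧
    -- each homogeneous component `(F n)·Xⁿ` is an `H`-submodule
    (∀ (h : H) (i : ℕ), ∀ a ∈ F i, ∃ b ∈ F i,
      μ' h (Polynomial.C a * Polynomial.X ^ i) = Polynomial.C b * Polynomial.X ^ i) := by
  refine ⟨?_, ?_, ?_, ?_, ?_, ?_, ?_⟩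
  · intro p; ext i; rw [hμ'coeff]; exact hμ_one _
  · intro h h' p; ext i; rw [hμ'coeff, hμ'coeff, hμ'coeff, hμ_mul]
  · intro h; ext i
    rw [hμ'coeff, Polynomial.coeff_smul]
    by_cases hi : i = 0
    · subst hi; simpa using hunit h
    · simp [Polynomial.coeff_one, hi, map_zero]
  · intro h p q
    ext m
    have key : ∀ t : H ⊗[k] H,
        (LinearMap.mul' k (Polynomial A)
          (TensorProduct.map (μ'.flip p) (μ'.flip q) t)).coeff m
        = ∑ ij ∈ Finset.HasAntidiagonal.antidiagonal m,
            LinearMap.mul' k A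
              (TensorProduct.map (μ.flip (p.coeff ij.1)) (μ.flip (q.coeff ij.2)) t) := by
      intro t
      induction t using TensorProduct.induction_on with
      | zero => simp
      | tmul x y =>
          simp only [TensorProduct.map_tmul, LinearMap.mul'_apply, LinearMap.flip_apply]
          rw [Polynomial.coeff_mul]
          exact Finset.sum_congr rfl fun ij _ => by rw [hμ'coeff, hμ'coeff]
      | add x y hx hy =>
          simp only [map_add, Polynomial.coeff_add, hx, hy, ← Finset.sum_add_distrib]
    rw [hμ'coeff, key, Polynomial.coeff_mul, map_sum]
    exact Finset.sum_congr rfl fun ij _ => hmul h _ _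
  · intro h p q
    ext m
    have key : ∀ t : H ⊗[k] H,
        (TensorProduct.lift Bp
          (TensorProduct.map (μ'.flip p) (μ'.flip q) t)).coeff m
        = ∑ ij ∈ Finset.HasAntidiagonal.antidiagonal m,
            TensorProduct.lift B
              (TensorProduct.map (μ.flip (p.coeff ij.1)) (μ.flip (q.coeff ij.2)) t) := by
      intro t
      induction t using TensorProduct.induction_on with
      | zero => simp
      | tmul x y =>
          simp only [TensorProduct.map_tmul, TensorProduct.lift.tmul, LinearMap.flip_apply]
          rw [hBpcoeff]
          exact Finset.sum_congr rfl fun ij _ => by rw [hμ'coeff, hμ'coeff]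
      | add x y hx hy =>
          simp only [map_add, Polynomial.coeff_add, hx, hy, ← Finset.sum_add_distrib]
    rw [hμ'coeff, key, hBpcoeff, map_sum]
    exact Finset.sum_congr rfl fun ij _ => hbr h _ _
  · intro h p hp i
    rw [hμ'coeff]; exact hFH i h _ (hp i)
  · intro h i a ha
    refine ⟨μ h a, hFH i h a ha, ?_⟩
    ext j
    rw [hμ'coeff]
    by_cases hj : j = i
    · subst hj; simp [Polynomial.coeff_C_mul, Polynomial.coeff_X_pow]
    · simp [Polynomial.coeff_C_mul, Polynomial.coeff_X_pow, hj, map_zero]
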